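/- arXiv:1908.03688 — 2 statements merged into one kernel-verified Lean document; each statement's English description precedes it below -/
import Mathlib

section
/- Let Φ be an invertible N×N complex matrix, let Λ be the diagonal N×N matrix with diagonal entries λ_1, …, λ_N ∈ ℂ satisfying |λ_k| ≤ 1 for all k, and set A = Φ Λ Φ⁻¹. Let ε ≥ 0 and let e, ρ : ℕ → (Fin N → ℂ) satisfy e^{n+1} = A e^n + ρ^n for all n, with ‖ρ^n‖₂ ≤ ε for all n ≥ m. Then for every n ≥ m, ‖e^n‖₂ ≤ ‖Φ‖_op · ‖Φ⁻¹‖_op · ( ‖e^m‖₂ + (n − m)·ε ), where ‖·‖_op is the operator norm induced by the Euclidean norm. -/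
/-!
In modal coordinates `g = Φ⁻¹ e` the propagator is the diagonal `Λ`, a contraction for the
Euclidean norm, so `‖g‖` grows by at most `‖Φ⁻¹‖ ε` per step. Going to modal coordinates at
time `m` and back at time `n` costs the factors `‖Φ⁻¹‖` and `‖Φ‖`.
-/

/-- The Euclidean (ℓ²) norm on `Fin N → ℂ`. -/
noncomputable def l2norm {N : ℕ} (v : Fin N → ℂ) : ℝ :=
  ‖(WithLp.equiv 2 (Fin N → ℂ)).symm v‖

/-- The operator norm of a square complex matrix induced by the Euclidean norm. -/
noncomputable def l2OpNorm {N : ℕ} (M : Matrix (Fin N) (Fin N) ℂ) : ℝ :=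
  ‖Matrix.toEuclideanCLM (𝕜 := ℂ) M‖

open Matrix
open scoped Matrix.Norms.L2Operator

theorem le_add_mul_of_succ_le_add {u : ℕ → ℝ} {δ : ℝ} {m : ℕ}
    (h : ∀ n, m ≤ n → u (n + 1) ≤ u n + δ) : ∀ n, m ≤ n → u n ≤ u m + (n - m : ℕ) * δ := by
  intro n hn
  induction n, hn using Nat.le_induction with
  | base => simp
  | succ n hmn ih =>
    calc u (n + 1) ≤ u m + (n - m : ℕ) * δ + δ := by linarith [h n hmn]
      _ = u m + (n + 1 - m : ℕ) * δ := by rw [Nat.succ_sub hmn]; push_cast; ring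

theorem Matrix.inv_mulVec_conj_mulVec {n R : Type*} [Fintype n] [DecidableEq n] [CommRing R]
    {Φ : Matrix n n R} (hΦ : IsUnit Φ) (D : Matrix n n R) (v : n → R) :
    Φ⁻¹ *ᵥ ((Φ * D * Φ⁻¹) *ᵥ v) = D *ᵥ (Φ⁻¹ *ᵥ v) := by
  rw [mulVec_mulVec, mulVec_mulVec, ← Matrix.mul_assoc, ← Matrix.mul_assoc,
    nonsing_inv_mul _ ((isUnit_iff_isUnit_det Φ).mp hΦ), Matrix.one_mul]

theorem l2norm_add_le {N : ℕ} (v w : Fin N → ℂ) : l2norm (v + w) ≤ l2norm v + l2norm w :=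
  norm_add_le _ _

theorem l2norm_mulVec_le {N : ℕ} (M : Matrix (Fin N) (Fin N) ℂ) (v : Fin N → ℂ) :
    l2norm (M *ᵥ v) ≤ l2OpNorm M * l2norm v :=
  (toEuclideanCLM (𝕜 := ℂ) M).le_opNorm _

theorem l2OpNorm_diagonal {N : ℕ} (lam : Fin N → ℂ) : l2OpNorm (diagonal lam) = ‖lam‖ :=
  l2_opNorm_diagonal lam

theorem l2norm_diagonal_mulVec_le {N : ℕ} {lam : Fin N → ℂ} (hlam : ∀ k, ‖lam k‖ ≤ 1)
    (v : Fin N → ℂ) : l2norm (diagonal lam *ᵥ v) ≤ l2norm v := by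
  have hD : l2OpNorm (diagonal lam) ≤ 1 := by
    rw [l2OpNorm_diagonal]; exact (pi_norm_le_iff_of_nonneg zero_le_one).mpr hlam
  calc l2norm (diagonal lam *ᵥ v) ≤ l2OpNorm (diagonal lam) * l2norm v := l2norm_mulVec_le _ _
    _ ≤ l2norm v := mul_le_of_le_one_left (norm_nonneg _) hD

theorem dmd_error_bound_opNorm_general {N : ℕ} (Φ : Matrix (Fin N) (Fin N) ℂ)
    (hΦ : IsUnit Φ)
    (lam : Fin N → ℂ) (hlam : ∀ k, ‖lam k‖ ≤ 1)
    (A : Matrix (Fin N) (Fin N) ℂ)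
    (hA : A = Φ * Matrix.diagonal lam * Φ⁻¹)
    (ε : ℝ) (m : ℕ)
    (e ρ : ℕ → (Fin N → ℂ))
    (hrec : ∀ n, e (n + 1) = A.mulVec (e n) + ρ n)
    (hρ : ∀ n, m ≤ n → l2norm (ρ n) ≤ ε) :
    ∀ n, m ≤ n →
      l2norm (e n) ≤ l2OpNorm Φ * l2OpNorm Φ⁻¹ * (l2norm (e m) + (n - m : ℕ) * ε) := by
  intro n hn
  set g : ℕ → Fin N → ℂ := fun k => Φ⁻¹ *ᵥ e k
  have hmodal : ∀ k, m ≤ k → l2norm (g (k + 1)) ≤ l2norm (g k) + l2OpNorm Φ⁻¹ * ε := by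
    intro k hk
    calc l2norm (g (k + 1)) = l2norm (diagonal lam *ᵥ g k + Φ⁻¹ *ᵥ ρ k) := by
          simp only [g, hrec k, hA, mulVec_add, inv_mulVec_conj_mulVec hΦ]
      _ ≤ l2norm (g k) + l2OpNorm Φ⁻¹ * ε := (l2norm_add_le _ _).trans <|
          add_le_add (l2norm_diagonal_mulVec_le hlam _)
            ((l2norm_mulVec_le _ _).trans (mul_le_mul_of_nonneg_left (hρ k hk) (norm_nonneg _)))
  have hgn := le_add_mul_of_succ_le_add (u := fun k => l2norm (g k)) hmodal n hn
  have hgm : l2norm (g m) ≤ l2OpNorm Φ⁻¹ * l2norm (e m) := l2norm_mulVec_le _ _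
  have hen : e n = Φ *ᵥ g n := by
    simp only [g, mulVec_mulVec, mul_nonsing_inv _ ((isUnit_iff_isUnit_det Φ).mp hΦ), one_mulVec]
  calc l2norm (e n) ≤ l2OpNorm Φ * l2norm (g n) := hen ▸ l2norm_mulVec_le _ _
    _ ≤ l2OpNorm Φ * (l2OpNorm Φ⁻¹ * l2norm (e m) + (n - m : ℕ) * (l2OpNorm Φ⁻¹ * ε)) := by
        gcongr
        · exact norm_nonneg _
        · linarith
    _ = l2OpNorm Φ * l2OpNorm Φ⁻¹ * (l2norm (e m) + (n - m : ℕ) * ε) := by ring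

/-- DMD error bound in terms of operator norms: if the error sequence evolves by
`A = Φ Λ Φ⁻¹` (with `Λ` diagonal of modulus ≤ 1) up to one-step residuals of size
at most `ε`, then the error grows at most linearly, with condition-number factor
`‖Φ‖ ‖Φ⁻¹‖`. -/
theorem dmd_error_bound_opNorm {N : ℕ} (Φ : Matrix (Fin N) (Fin N) ℂ)
    (hΦ : IsUnit Φ)
    (lam : Fin N → ℂ) (hlam : ∀ k, ‖lam k‖ ≤ 1)
    (A : Matrix (Fin N) (Fin N) ℂ)
    (hA : A = Φ * Matrix.diagonal lam * Φ⁻¹)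
    (ε : ℝ) (hε : 0 ≤ ε) (m : ℕ)
    (e ρ : ℕ → (Fin N → ℂ))
    (hrec : ∀ n, e (n + 1) = A.mulVec (e n) + ρ n)
    (hρ : ∀ n, m ≤ n → l2norm (ρ n) ≤ ε) :
    ∀ n, m ≤ n →
      l2norm (e n) ≤ l2OpNorm Φ * l2OpNorm Φ⁻¹ * (l2norm (e m) + (n - m : ℕ) * ε) :=
  dmd_error_bound_opNorm_general Φ hΦ lam hlam A hA ε m e ρ hrec hρ
end

section
/- Let X₁, X₂ be N×m complex matrices and A an N×N complex matrix with X₂ = A X₁. Suppose X₁ = U Σ V* where U is N×r with orthonormal columns (U* U = I_r), V is m×r with orthonormal columns (V* V = I_r), and Σ is an invertible r×r matrix. Assume moreover that the range of A U is contained in the range of U, i.e. U U* A U = A U. Define K̃ = U* X₂ V Σ⁻¹. If w ∈ ℂ^r is an eigenvector of K̃ with eigenvalue λ (K̃ w = λ w) and U w ≠ 0, then U w is an eigenvector of A with the same eigenvalue: A (U w) = λ (U w). -/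
/-- Correctness of the DMD algorithm: for snapshot matrices `X₁ = U Σ Vᴴ` (reduced
exact SVD) and `X₂ = A X₁`, with the range of `A U` contained in the range of `U`,
the eigenpairs `(λ, w)` of the reduced matrix `K̃ = Uᴴ X₂ V Σ⁻¹` lift to eigenpairs
`(λ, U w)` of `A`. -/
theorem dmd_mode_eigenpair {N m r : ℕ}
    (X₁ X₂ : Matrix (Fin N) (Fin m) ℂ)
    (A : Matrix (Fin N) (Fin N) ℂ)
    (hX : X₂ = A * X₁)
    (U : Matrix (Fin N) (Fin r) ℂ)
    (V : Matrix (Fin m) (Fin r) ℂ)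
    (S : Matrix (Fin r) (Fin r) ℂ) [Invertible S]
    (hSVD : X₁ = U * S * V.conjTranspose)
    (hU : U.conjTranspose * U = 1)
    (hV : V.conjTranspose * V = 1)
    (hrange : U * U.conjTranspose * A * U = A * U)
    (K : Matrix (Fin r) (Fin r) ℂ)
    (hK : K = U.conjTranspose * X₂ * V * S⁻¹)
    (w : Fin r → ℂ) (lam : ℂ)
    (hw : K.mulVec w = lam • w)
    (hUw : U.mulVec w ≠ 0) :
    A.mulVec (U.mulVec w) = lam • U.mulVec w := by
  have hKA : K = U.conjTranspose * A * U := by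
    subst hX hSVD
    rw [hK]
    have h1 : U.conjTranspose * (A * (U * S * V.conjTranspose)) * V * S⁻¹
        = U.conjTranspose * A * U * S * (V.conjTranspose * V) * S⁻¹ := by
      simp only [Matrix.mul_assoc]
    rw [h1, hV, Matrix.mul_one, Matrix.mul_assoc, Matrix.mul_inv_of_invertible,
      Matrix.mul_one]
  have hAU : A * U = U * K := by
    rw [hKA, ← Matrix.mul_assoc, ← Matrix.mul_assoc, hrange]
  calc A.mulVec (U.mulVec w) = (A * U).mulVec w := by rw [Matrix.mulVec_mulVec]
    _ = U.mulVec (K.mulVec w) := by rw [hAU, ← Matrix.mulVec_mulVec]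
    _ = lam • U.mulVec w := by rw [hw, Matrix.mulVec_smul]
end
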